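/- Let p ≥ 5 be prime and n ≥ 1. Assuming the Estermann–Weil bound for Kloosterman sums modulo pⁿ, the chromatic number of the Cayley graph Cay((ℤ/pⁿℤ)², {(x,y) : xy = 1}) is at least √p/4. -/

import Mathlib

/-- The hyperbola graph `H(R) = Cay(R², {(x,y) : xy = 1})`. -/
def hgraph (R : Type) [CommRing R] : SimpleGraph (R × R) :=
  SimpleGraph.fromRel (fun v w => (w.1 - v.1) * (w.2 - v.2) = 1)

/-- The Kloosterman sum `Kl(u,v,m) = Σ_{x ∈ (ℤ/mℤ)*} e^{2πi(ux + vx⁻¹)/m}`. -/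
noncomputable def kl (m : ℕ) (hm : m ≠ 0) (u v : ZMod m) : ℂ :=
  haveI : NeZero m := ⟨hm⟩
  ∑ x : (ZMod m)ˣ,
    Complex.exp (2 * Real.pi * Complex.I *
      ((u * (x : ZMod m) + v * ((x⁻¹ : (ZMod m)ˣ) : ZMod m)).val : ℕ) / m)

/-!
A colour class of a proper colouring of `Cay((ℤ/mℤ)², A)`, `A = {xy = 1}`, is a set `S` with
`(A + S) ∩ S = ∅`. Expanding `#{(a, s) ∈ A × S : a + s ∈ S} = 0` in the characters
`x ↦ ψ(w₁x₁ + w₂x₂)` of `(ℤ/mℤ)²`, the trivial character contributes `#A · #S²`, while the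
others contribute at most `λ · Σ_w |Ŝ(w)|² = λ · m² · #S` (Parseval), where
`λ = max_{w ≠ 0} |Kl(w₁, w₂, m)|`. Hence `#S ≤ λ m² / #A`, and so `χ ≥ #A / λ`.
For `m = pⁿ`, `#A = pⁿ⁻¹(p - 1)` and Estermann–Weil gives `λ ≤ 2 pⁿ⁻¹ √p`.
-/

open Finset ComplexConjugate

theorem SimpleGraph.Colorable.exists_isIndepSet_card_le_mul {V : Type*} [Fintype V]
    {G : SimpleGraph V} {c : ℕ} (hG : G.Colorable c) :
    ∃ S : Finset V, G.IsIndepSet (S : Set V) ∧ Fintype.card V ≤ c * #S := by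
  classical
  obtain ⟨C⟩ := hG
  rcases Nat.eq_zero_or_pos c with rfl | hc
  · refine ⟨∅, by simp, ?_⟩
    simpa using (Fintype.card_eq_zero_iff.2 ⟨fun v => (C v).elim0⟩).le
  have hc' : (c : ℚ) ≠ 0 := by positivity
  obtain ⟨i, -, hi⟩ := exists_le_card_fiber_of_nsmul_le_card_of_maps_to (s := univ)
    (f := C) (b := (Fintype.card V / c : ℚ)) (fun _ _ => mem_univ _)
    (univ_nonempty_iff.2 ⟨⟨0, hc⟩⟩) (by simp [nsmul_eq_mul, mul_div_cancel₀ _ hc'])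
  refine ⟨({v | C v = i} : Finset V), ?_, ?_⟩
  · simpa [SimpleGraph.Coloring.colorClass] using C.isIndepSet_colorClass i
  · rw [div_le_iff₀' (by positivity)] at hi
    exact_mod_cast hi

section CharSum

variable {R : Type*} [CommRing R]

/-- The Fourier coefficient of `S` at `w`; for primitive `ψ`, the characters `ψ (w * ·)` are all
the characters of `R`. -/
def charSum (ψ : AddChar R ℂ) (S : Finset R) (w : R) : ℂ := ∑ s ∈ S, ψ (w * s)

lemma charSum_zero (ψ : AddChar R ℂ) (S : Finset R) : charSum ψ S 0 = #S := by
  simp [charSum]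

lemma charSum_mul_conj (ψ : AddChar R ℂ) (S : Finset R) (w : R) :
    charSum ψ S w * conj (charSum ψ S w) = (‖charSum ψ S w‖ ^ 2 : ℝ) := by
  rw [Complex.mul_conj, Complex.normSq_eq_norm_sq]

variable [Fintype R] [DecidableEq R]

theorem sum_charSum_mul_normSq_charSum {ψ : AddChar R ℂ} (hψ : ψ.IsPrimitive)
    (A S : Finset R) :
    ∑ w, charSum ψ A w * (‖charSum ψ S w‖ ^ 2 : ℝ)
      = Fintype.card R * #{x ∈ A ×ˢ S | x.1 + x.2 ∈ S} := by
  have expand (w : R) : charSum ψ A w * (‖charSum ψ S w‖ ^ 2 : ℝ)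
      = ∑ a ∈ A, ∑ s ∈ S, ∑ t ∈ S, ψ (w * (a + s - t)) := by
    rw [← charSum_mul_conj, charSum, charSum, map_sum, sum_mul_sum, sum_mul_sum]
    simp_rw [mul_sum]
    refine sum_congr rfl fun a _ => sum_congr rfl fun s _ => sum_congr rfl fun t _ => ?_
    rw [← AddChar.map_neg_eq_conj, ← AddChar.map_add_eq_mul, ← AddChar.map_add_eq_mul]
    ring_nf
  calc ∑ w, charSum ψ A w * (‖charSum ψ S w‖ ^ 2 : ℝ)
      = ∑ a ∈ A, ∑ s ∈ S, ∑ t ∈ S, ∑ w, ψ (w * (a + s - t)) := by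
        simp_rw [expand]
        rw [sum_comm]; refine sum_congr rfl fun a _ => ?_
        rw [sum_comm]; refine sum_congr rfl fun s _ => ?_
        rw [sum_comm]
    _ = ∑ a ∈ A, ∑ s ∈ S, ∑ t ∈ S, if a + s = t then (Fintype.card R : ℂ) else 0 := by
        simp_rw [AddChar.sum_mulShift _ hψ, sub_eq_zero]
        push_cast; rfl
    _ = Fintype.card R * #{x ∈ A ×ˢ S | x.1 + x.2 ∈ S} := by
        simp_rw [sum_ite_eq, ← sum_product', ← sum_filter, sum_const, nsmul_eq_mul, mul_comm]

theorem sum_normSq_charSum {ψ : AddChar R ℂ} (hψ : ψ.IsPrimitive) (S : Finset R) :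
    ∑ w, ‖charSum ψ S w‖ ^ 2 = Fintype.card R * #S := by
  have h := sum_charSum_mul_normSq_charSum hψ {0} S
  simp only [charSum, sum_singleton, mul_zero, AddChar.map_zero_eq_one, one_mul] at h
  rw [filter_true_of_mem (by simp +contextual), singleton_product, card_map] at h
  exact_mod_cast h

theorem card_mul_card_le_of_norm_charSum_le {ψ : AddChar R ℂ} (hψ : ψ.IsPrimitive)
    {A S : Finset R} (hAS : ∀ a ∈ A, ∀ s ∈ S, a + s ∉ S) {l : ℝ} (hl₀ : 0 ≤ l)
    (hl : ∀ w ≠ 0, ‖charSum ψ A w‖ ≤ l) :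
    (#A * #S : ℝ) ≤ l * Fintype.card R := by
  set N : R → ℝ := fun w => ‖charSum ψ S w‖ ^ 2
  have hvanish : ∑ w, charSum ψ A w * N w = 0 := by
    rw [sum_charSum_mul_normSq_charSum hψ, filter_false_of_mem fun x hx =>
      hAS _ (mem_product.1 hx).1 _ (mem_product.1 hx).2]
    simp
  have hrest : ∑ w ∈ univ.erase 0, charSum ψ A w * N w = -(#A * #S ^ 2 : ℝ) := by
    rw [← add_sum_erase _ _ (mem_univ 0)] at hvanish
    have hN₀ : N 0 = #S ^ 2 := by simp [N, charSum_zero]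
    rw [hN₀, charSum_zero] at hvanish
    push_cast at hvanish ⊢
    linear_combination hvanish
  have key : (#A * #S ^ 2 : ℝ) ≤ l * (Fintype.card R * #S) :=
    calc (#A * #S ^ 2 : ℝ)
        = ‖∑ w ∈ univ.erase 0, charSum ψ A w * N w‖ := by
          rw [hrest, norm_neg]; norm_cast
      _ ≤ ∑ w ∈ univ.erase 0, l * N w := by
          refine (norm_sum_le _ _).trans (sum_le_sum fun w hw => ?_)
          rw [norm_mul, Complex.norm_real, Real.norm_of_nonneg (by positivity)]
          exact mul_le_mul_of_nonneg_right (hl w (ne_of_mem_erase hw)) (by positivity)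
      _ ≤ ∑ w, l * N w :=
          sum_le_sum_of_subset_of_nonneg (erase_subset _ _) fun _ _ _ => by positivity
      _ = l * (Fintype.card R * #S) := by rw [← mul_sum, sum_normSq_charSum hψ]
  rcases (#S).eq_zero_or_pos with hS | hS
  · simp [hS]; positivity
  · nlinarith [(Nat.cast_pos (α := ℝ)).2 hS]

end CharSum

namespace AddChar

variable {R M : Type*} [AddCommMonoid R] [CommMonoid M]

/-- `ψ.coordSum (w * x) = ψ (w.1 * x.1 + w.2 * x.2)`: the dot-product pairing on `R × R`. -/
def coordSum (ψ : AddChar R M) : AddChar (R × R) M :=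
  ψ.compAddMonoidHom ((AddMonoidHom.fst R R) + AddMonoidHom.snd R R)

@[simp]
lemma coordSum_apply (ψ : AddChar R M) (x : R × R) : ψ.coordSum x = ψ (x.1 + x.2) := rfl

end AddChar

theorem AddChar.IsPrimitive.coordSum {R M : Type*} [CommRing R] [CommMonoid M]
    {ψ : AddChar R M} (hψ : ψ.IsPrimitive) : ψ.coordSum.IsPrimitive := by
  intro a ha htriv
  have key (x : R × R) : ψ (a.1 * x.1 + a.2 * x.2) = 1 := by
    simpa using DFunLike.congr_fun htriv x
  by_cases h₁ : a.1 = 0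
  · have h₂ : a.2 ≠ 0 := fun h₂ => ha (Prod.ext h₁ h₂)
    exact hψ h₂ (by ext y; simpa using key (0, y))
  · exact hψ h₁ (by ext y; simpa using key (y, 0))

section Hyperbola

variable (R : Type) [CommRing R] [Fintype R] [DecidableEq R]

def hyperbola : Finset (R × R) :=
  univ.map ⟨fun x : Rˣ => ((x : R), ((x⁻¹ : Rˣ) : R)),
    fun _ _ h => Units.ext (congrArg Prod.fst h)⟩

variable {R}

lemma card_hyperbola : #(hyperbola R) = Fintype.card Rˣ := by
  simp [hyperbola]

lemma charSum_coordSum_hyperbola (ψ : AddChar R ℂ) (w : R × R) :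
    charSum ψ.coordSum (hyperbola R) w =
      ∑ x : Rˣ, ψ (w.1 * (x : R) + w.2 * ((x⁻¹ : Rˣ) : R)) := by
  rw [charSum, hyperbola, sum_map]
  rfl

lemma hgraph_adj_add_of_mem_hyperbola [Nontrivial R] {a : R × R} (ha : a ∈ hyperbola R)
    (s : R × R) : (hgraph R).Adj s (a + s) := by
  obtain ⟨x, -, rfl⟩ := mem_map.1 ha
  have hrel : ((x : R) + s.1 - s.1) * (((x⁻¹ : Rˣ) : R) + s.2 - s.2) = 1 := by simp
  refine (SimpleGraph.fromRel_adj _ _ _).2 ⟨fun h => ?_, Or.inl hrel⟩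
  have hx : (x : R) + s.1 = s.1 := (congrArg Prod.fst h).symm
  simp at hx

theorem card_units_le_mul_of_colorable_hgraph [Nontrivial R] {ψ : AddChar R ℂ}
    (hψ : ψ.IsPrimitive) {l : ℝ} (hl₀ : 0 ≤ l)
    (hl : ∀ w : R × R, w ≠ 0 → ‖∑ x : Rˣ, ψ (w.1 * (x : R) + w.2 * ((x⁻¹ : Rˣ) : R))‖ ≤ l)
    {c : ℕ} (hc : (hgraph R).Colorable c) : (Fintype.card Rˣ : ℝ) ≤ c * l := by
  obtain ⟨S, hS, hcard⟩ := hc.exists_isIndepSet_card_le_mul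
  have hAS : ∀ a ∈ hyperbola R, ∀ s ∈ S, a + s ∉ S := fun a ha s hs has =>
    hS hs has (hgraph_adj_add_of_mem_hyperbola ha s).ne (hgraph_adj_add_of_mem_hyperbola ha s)
  have h := card_mul_card_le_of_norm_charSum_le hψ.coordSum hAS hl₀
    (by simpa only [charSum_coordSum_hyperbola] using hl)
  have hS₀ : (0 : ℝ) < #S := by
    have : 0 < Fintype.card (R × R) := Fintype.card_pos
    exact_mod_cast Nat.pos_of_mul_pos_left (this.trans_le hcard)
  rw [card_hyperbola] at h
  have hcard' : (Fintype.card (R × R) : ℝ) ≤ c * #S := by exact_mod_cast hcard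
  nlinarith

end Hyperbola

lemma kl_eq_sum_stdAddChar (m : ℕ) [NeZero m] (u v : ZMod m) :
    kl m (NeZero.ne m) u v =
      ∑ x : (ZMod m)ˣ, ZMod.stdAddChar (u * (x : ZMod m) + v * ((x⁻¹ : (ZMod m)ˣ) : ZMod m)) := by
  simp only [kl, ZMod.stdAddChar_apply, ZMod.toCircle_apply]

lemma ZMod.gcd_gcd_val_lt {m : ℕ} [NeZero m] {w : ZMod m × ZMod m} (hw : w ≠ 0) :
    Nat.gcd (Nat.gcd w.1.val w.2.val) m < m := by
  refine lt_of_le_of_ne (Nat.le_of_dvd (NeZero.pos m) (Nat.gcd_dvd_right _ _)) fun h => hw ?_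
  have hdvd : m ∣ Nat.gcd w.1.val w.2.val := Nat.gcd_eq_right_iff_dvd.1 h
  ext
  · exact (ZMod.val_eq_zero _).1 <|
      Nat.eq_zero_of_dvd_of_lt (hdvd.trans (Nat.gcd_dvd_left _ _)) (ZMod.val_lt _)
  · exact (ZMod.val_eq_zero _).1 <|
      Nat.eq_zero_of_dvd_of_lt (hdvd.trans (Nat.gcd_dvd_right _ _)) (ZMod.val_lt _)

lemma Nat.le_pow_pred_of_dvd_of_lt {p n d : ℕ} (hp : p.Prime) (hd : d ∣ p ^ n)
    (hlt : d < p ^ n) : d ≤ p ^ (n - 1) := by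
  obtain ⟨k, -, rfl⟩ := (Nat.dvd_prime_pow hp).1 hd
  have : k < n := (Nat.pow_lt_pow_iff_right hp.one_lt).1 hlt
  exact Nat.pow_le_pow_right hp.pos (by omega)

lemma Real.sqrt_pow_pred_mul_sqrt_pow {x : ℝ} (hx : 0 ≤ x) {n : ℕ} (hn : 1 ≤ n) :
    √(x ^ (n - 1)) * √(x ^ n) = x ^ (n - 1) * √x := by
  have : x ^ (n - 1) * x ^ n = (x ^ (n - 1)) ^ 2 * x := by
    rw [sq, mul_assoc, ← pow_succ, Nat.sub_add_cancel hn]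
  rw [← Real.sqrt_mul (by positivity), this, Real.sqrt_mul (by positivity),
    Real.sqrt_sq (by positivity)]

lemma Real.sqrt_div_four_le_of_sub_one_le {x c : ℝ} (hx : 2 ≤ x) (h : x - 1 ≤ c * (2 * √x)) :
    √x / 4 ≤ c := by
  have hs : √x * √x = x := Real.mul_self_sqrt (by linarith)
  have hs₀ : 0 < √x := Real.sqrt_pos.2 (by linarith)
  nlinarith

theorem norm_kl_le_of_estermann_weil {p n : ℕ} (hp : p.Prime) (hn : 1 ≤ n)
    (hEW : ∀ u v : ZMod (p ^ n),
      ‖kl (p ^ n) (pow_ne_zero n hp.ne_zero) u v‖ ≤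
        2 * √(Nat.gcd (Nat.gcd u.val v.val) (p ^ n)) * √(p ^ n))
    {w : ZMod (p ^ n) × ZMod (p ^ n)} (hw : w ≠ 0) :
    ‖kl (p ^ n) (pow_ne_zero n hp.ne_zero) w.1 w.2‖ ≤ 2 * (p : ℝ) ^ (n - 1) * √p := by
  have : NeZero (p ^ n) := ⟨pow_ne_zero n hp.ne_zero⟩
  have hgcd : (Nat.gcd (Nat.gcd w.1.val w.2.val) (p ^ n) : ℝ) ≤ (p : ℝ) ^ (n - 1) := by
    exact_mod_cast Nat.le_pow_pred_of_dvd_of_lt hp (Nat.gcd_dvd_right _ _)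
      (ZMod.gcd_gcd_val_lt hw)
  calc _ ≤ 2 * √(Nat.gcd (Nat.gcd w.1.val w.2.val) (p ^ n)) * √((p : ℝ) ^ n) := hEW w.1 w.2
    _ ≤ 2 * √((p : ℝ) ^ (n - 1)) * √((p : ℝ) ^ n) := by gcongr
    _ = 2 * (p : ℝ) ^ (n - 1) * √p := by
        rw [mul_assoc, Real.sqrt_pow_pred_mul_sqrt_pow (Nat.cast_nonneg p) hn, mul_assoc]

theorem hyperbola_chromatic_lower_general (p n : ℕ) (hp : p.Prime) (hn : 1 ≤ n)
    (hEW : ∀ u v : ZMod (p ^ n),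
      ‖kl (p ^ n) (pow_ne_zero n hp.ne_zero) u v‖ ≤
        2 * Real.sqrt (Nat.gcd (Nat.gcd u.val v.val) (p ^ n)) * Real.sqrt (p ^ n)) :
    ∀ c : ℕ, (hgraph (ZMod (p ^ n))).Colorable c → Real.sqrt p / 4 ≤ c := by
  intro c hc
  have : NeZero (p ^ n) := ⟨pow_ne_zero n hp.ne_zero⟩
  have : Fact (1 < p ^ n) := ⟨Nat.one_lt_pow (by omega) hp.one_lt⟩
  have h := card_units_le_mul_of_colorable_hgraph (ZMod.isPrimitive_stdAddChar _)
    (l := 2 * (p : ℝ) ^ (n - 1) * √p) (by positivity) (fun w hw => by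
      rw [← kl_eq_sum_stdAddChar]
      exact norm_kl_le_of_estermann_weil hp hn hEW hw) hc
  rw [ZMod.card_units_eq_totient, Nat.totient_prime_pow hp hn] at h
  push_cast [Nat.cast_sub hp.one_le] at h
  refine Real.sqrt_div_four_le_of_sub_one_le (x := p) (mod_cast hp.two_le) ?_
  have hpow : (0 : ℝ) < (p : ℝ) ^ (n - 1) := pow_pos (mod_cast hp.pos) _
  nlinarith

/-- For `p ≥ 5` prime and `n ≥ 1`, assuming the Estermann–Weil bound for
Kloosterman sums modulo `pⁿ`, the chromatic number of the hyperbola Cayley graph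
on `(ℤ/pⁿℤ)²` is at least `√p/4`. -/
theorem hyperbola_chromatic_lower (p n : ℕ) (hp : p.Prime) (hp5 : 5 ≤ p) (hn : 1 ≤ n)
    (hEW : ∀ u v : ZMod (p ^ n),
      ‖kl (p ^ n) (pow_ne_zero n hp.ne_zero) u v‖ ≤
        2 * Real.sqrt (Nat.gcd (Nat.gcd u.val v.val) (p ^ n)) * Real.sqrt (p ^ n)) :
    ∀ c : ℕ, (hgraph (ZMod (p ^ n))).Colorable c → Real.sqrt p / 4 ≤ c :=
  hyperbola_chromatic_lower_general p n hp hn hEW
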